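/- The function Ψ₀(V) := Ψ(0,V) satisfies: for S in a compact subset K of (-1,1), there are constants 0 < c ≤ C (depending on K) with c Ψ₀(V) ≤ Ψ(S,V) ≤ C Ψ₀(V) for all V ∈ ℝ. -/
import Mathlib

open Real Set

/-- The convex kinetic term `Ψ`. -/
noncomputable def Psi (S V : ℝ) : ℝ :=
  (1/2) * ∫ Z in (0:ℝ)..V, (V - Z) / Real.sqrt (Z^2 + (1-S)*(1+S))

/-- `Ψ₀(V) = Ψ(0,V)`. -/
noncomputable def Psi0 (V : ℝ) : ℝ := Psi 0 V

lemma cont_integrand (a V : ℝ) (ha : 0 < a) :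
    Continuous fun Z : ℝ => (V - Z) / Real.sqrt (Z^2 + a) := by
  apply Continuous.div (by continuity)
  · exact Real.continuous_sqrt.comp (by continuity)
  · intro Z
    exact ne_of_gt (Real.sqrt_pos.mpr (by positivity))

lemma key (m a : ℝ) (hm : 0 < m) (hma : m ≤ a) (ha : a ≤ 1) (V : ℝ) :
    Psi0 V ≤ (1/2) * ∫ Z in (0:ℝ)..V, (V - Z) / Real.sqrt (Z^2 + a) ∧
      (1/2) * (∫ Z in (0:ℝ)..V, (V - Z) / Real.sqrt (Z^2 + a)) ≤ (Real.sqrt m)⁻¹ * Psi0 V := by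
  have hm1 : m ≤ 1 := hma.trans ha
  have hPsi0 : Psi0 V = (1/2) * ∫ Z in (0:ℝ)..V, (V - Z) / Real.sqrt (Z^2 + 1) := by
    have : (1 - (0:ℝ)) * (1 + 0) = 1 := by norm_num
    simp only [Psi0, Psi, this]
  have ha0 : 0 < a := hm.trans_le hma
  have hca := cont_integrand a V ha0
  have hc1 := cont_integrand 1 V one_pos
  have sqm : 0 < Real.sqrt m := Real.sqrt_pos.mpr hm
  have hsa : ∀ Z : ℝ, 0 < Real.sqrt (Z^2 + a) := fun Z => Real.sqrt_pos.mpr (by positivity)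
  have hs1 : ∀ Z : ℝ, 0 < Real.sqrt (Z^2 + 1) := fun Z => Real.sqrt_pos.mpr (by positivity)
  have h1 : ∀ Z : ℝ, Real.sqrt (Z^2 + a) ≤ Real.sqrt (Z^2 + 1) :=
    fun Z => Real.sqrt_le_sqrt (by linarith)
  have h2 : ∀ Z : ℝ, Real.sqrt m * Real.sqrt (Z^2 + 1) ≤ Real.sqrt (Z^2 + a) := by
    intro Z
    rw [← Real.sqrt_mul hm.le]
    exact Real.sqrt_le_sqrt (by nlinarith [sq_nonneg Z])
  have hrw : ∀ Z : ℝ, (Real.sqrt m)⁻¹ * ((V - Z) / Real.sqrt (Z^2 + 1))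
      = (V - Z) / (Real.sqrt m * Real.sqrt (Z^2 + 1)) := by
    intro Z
    have h1 := (hs1 Z).ne'
    field_simp
  have hcm : Continuous fun Z : ℝ => (V - Z) / (Real.sqrt m * Real.sqrt (Z^2 + 1)) := by
    have heq : (fun Z : ℝ => (V - Z) / (Real.sqrt m * Real.sqrt (Z^2 + 1)))
        = fun Z : ℝ => (Real.sqrt m)⁻¹ * ((V - Z) / Real.sqrt (Z^2 + 1)) := by
      funext Z; rw [hrw]
    rw [heq]
    exact continuous_const.mul hc1
  have hC : (Real.sqrt m)⁻¹ * Psi0 V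
      = (1/2) * ∫ Z in (0:ℝ)..V, (V - Z) / (Real.sqrt m * Real.sqrt (Z^2 + 1)) := by
    rw [hPsi0, ← mul_assoc, mul_comm _ (1/2 : ℝ), mul_assoc,
      ← intervalIntegral.integral_const_mul]
    simp_rw [hrw]
  rcases le_or_gt 0 V with hV | hV
  · constructor
    · rw [hPsi0]
      have := intervalIntegral.integral_mono_on hV (hc1.intervalIntegrable (μ := MeasureTheory.volume) 0 V)
        (hca.intervalIntegrable (μ := MeasureTheory.volume) 0 V) (fun Z hZ => by
          have ht : 0 ≤ V - Z := by linarith [hZ.2]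
          rw [div_le_div_iff₀ (hs1 Z) (hsa Z)]
          nlinarith [h1 Z, hsa Z, hs1 Z])
      linarith
    · rw [hC]
      have := intervalIntegral.integral_mono_on hV (hca.intervalIntegrable (μ := MeasureTheory.volume) 0 V)
        (hcm.intervalIntegrable (μ := MeasureTheory.volume) 0 V) (fun Z hZ => by
          have ht : 0 ≤ V - Z := by linarith [hZ.2]
          have hpos : 0 < Real.sqrt m * Real.sqrt (Z^2 + 1) := by positivity
          rw [div_le_div_iff₀ (hsa Z) hpos]
          nlinarith [h2 Z, hsa Z])
      linarith
  · have hsym : ∀ f : ℝ → ℝ, (∫ Z in (0:ℝ)..V, f Z) = -(∫ Z in V..(0:ℝ), f Z) :=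
      fun f => intervalIntegral.integral_symm V 0
    constructor
    · rw [hPsi0, hsym, hsym]
      have := intervalIntegral.integral_mono_on hV.le (hca.intervalIntegrable (μ := MeasureTheory.volume) V 0)
        (hc1.intervalIntegrable (μ := MeasureTheory.volume) V 0) (fun Z hZ => by
          have ht : V - Z ≤ 0 := by linarith [hZ.1]
          rw [div_le_div_iff₀ (hsa Z) (hs1 Z)]
          nlinarith [h1 Z, hsa Z, hs1 Z])
      linarith
    · rw [hC, hsym, hsym]
      have := intervalIntegral.integral_mono_on hV.le (hcm.intervalIntegrable (μ := MeasureTheory.volume) V 0)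
        (hca.intervalIntegrable (μ := MeasureTheory.volume) V 0) (fun Z hZ => by
          have ht : V - Z ≤ 0 := by linarith [hZ.1]
          have hpos : 0 < Real.sqrt m * Real.sqrt (Z^2 + 1) := by positivity
          rw [div_le_div_iff₀ hpos (hsa Z)]
          nlinarith [h2 Z, hsa Z])
      linarith

theorem Psi_comparable_to_Psi0 (K : Set ℝ) (hK : IsCompact K)
    (hK' : K ⊆ Set.Ioo (-1:ℝ) 1) :
    ∃ c C : ℝ, 0 < c ∧ c ≤ C ∧
      ∀ S ∈ K, ∀ V : ℝ, c * Psi0 V ≤ Psi S V ∧ Psi S V ≤ C * Psi0 V := by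
  rcases K.eq_empty_or_nonempty with rfl | hne
  · exact ⟨1, 1, one_pos, le_refl 1, fun S hS => absurd hS (notMem_empty S)⟩
  · obtain ⟨S₀, hS₀K, hmin⟩ := hK.exists_isMinOn hne
      (Continuous.continuousOn (by continuity : Continuous fun S : ℝ => 1 - S^2))
    have hS₀ : ∀ S ∈ K, 1 - S₀^2 ≤ 1 - S^2 := fun S hS => isMinOn_iff.mp hmin S hS
    set m : ℝ := 1 - S₀^2 with hm_def
    obtain ⟨hS₀l, hS₀r⟩ := hK' hS₀K
    have hm : 0 < m := by nlinarith
    have hm1 : m ≤ 1 := by nlinarith [sq_nonneg S₀]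
    have sqm : 0 < Real.sqrt m := Real.sqrt_pos.mpr hm
    have hC1 : (1:ℝ) ≤ (Real.sqrt m)⁻¹ := by
      rw [le_inv_comm₀ one_pos sqm]
      simpa using Real.sqrt_le_sqrt hm1
    refine ⟨1, (Real.sqrt m)⁻¹, one_pos, hC1, fun S hS V => ?_⟩
    obtain ⟨hSl, hSr⟩ := hK' hS
    have ha_eq : (1 - S) * (1 + S) = 1 - S^2 := by ring
    have hma : m ≤ 1 - S^2 := hS₀ S hS
    have ha1 : 1 - S^2 ≤ 1 := by nlinarith [sq_nonneg S]
    have hk := key m ((1 - S) * (1 + S)) hm (by rw [ha_eq]; exact hma) (by rw [ha_eq]; exact ha1) V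
    have hPsi : Psi S V = (1/2) * ∫ Z in (0:ℝ)..V, (V - Z) / Real.sqrt (Z^2 + (1-S)*(1+S)) := rfl
    rw [hPsi, one_mul]
    exact hk
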